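/- arXiv:2603.29445 — 3 statements merged into one kernel-verified Lean document; each statement's English description precedes it below -/
import Mathlib

section
/- (Vertex-based robust invariance.) Let S = {x ∈ ℝⁿ : Fx ≤ s} be the convex hull of finitely many points x_1,…,x_M, each satisfying Fx_j ≤ s. Suppose for each vertex x_j there is an input u_j such that F(A_i x_j + B_i u_j) + d ≤ s componentwise for all i = 1,…,N, where d ∈ ℝᶠ. Then for every x ∈ S, writing x = Σ_j λ_j x_j with λ ∈ Δ_M and setting u = Σ_j λ_j u_j, for every p ∈ Δ_N and every disturbance w with Fw ≤ d componentwise, the successor state (Σ_i p_i A_i)x + (Σ_i p_i B_i)u + w belongs to S. -/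
open Matrix Finset

private lemma mulVec_sum' {f n α : Type*} [DecidableEq α] [Fintype n] (F : Matrix f n ℝ)
    (t : Finset α) (g : α → n → ℝ) :
    F.mulVec (∑ j ∈ t, g j) = ∑ j ∈ t, F.mulVec (g j) := by
  induction t using Finset.induction with
  | empty => simp [Matrix.mulVec_zero]
  | insert _ _ h ih => simp [Finset.sum_insert h, Matrix.mulVec_add, ih]

private lemma sum_mulVec' {f n α : Type*} [DecidableEq α] [Fintype n] [Fintype f]
    (t : Finset α) (A : α → Matrix f n ℝ) (x : n → ℝ) :
    (∑ i ∈ t, A i).mulVec x = ∑ i ∈ t, (A i).mulVec x := by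
  induction t using Finset.induction with
  | empty => simp [Matrix.zero_mulVec]
  | insert _ _ h ih => simp [Finset.sum_insert h, Matrix.add_mulVec, ih]

/-- Vertex-based robust invariance: if the RCI inequality holds at every vertex,
then any convex combination with the interpolated input, under any simplex model
weights and any disturbance `w` with `Fw ≤ d`, remains in the set. -/
theorem vertex_robust_invariance (f n m N M : ℕ)
    (F : Matrix (Fin f) (Fin n) ℝ) (s d : Fin f → ℝ)
    (A : Fin N → Matrix (Fin n) (Fin n) ℝ) (B : Fin N → Matrix (Fin n) (Fin m) ℝ)
    (xv : Fin M → Fin n → ℝ) (uv : Fin M → Fin m → ℝ)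
    (hS : {x : Fin n → ℝ | F.mulVec x ≤ s} = convexHull ℝ (Set.range xv))
    (hxv : ∀ j, F.mulVec (xv j) ≤ s)
    (hRCI : ∀ i j, F.mulVec ((A i).mulVec (xv j) + (B i).mulVec (uv j)) + d ≤ s)
    (lam : Fin M → ℝ) (hl0 : ∀ j, 0 ≤ lam j) (hl1 : ∑ j, lam j = 1)
    (x : Fin n → ℝ) (hx : x = ∑ j, lam j • xv j)
    (p : Fin N → ℝ) (hp0 : ∀ i, 0 ≤ p i) (hp1 : ∑ i, p i = 1)
    (w : Fin n → ℝ) (hw : F.mulVec w ≤ d) :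
    (∑ i, p i • A i).mulVec x + (∑ i, p i • B i).mulVec (∑ j, lam j • uv j) + w ∈
      {x : Fin n → ℝ | F.mulVec x ≤ s} := by
  set u : Fin m → ℝ := ∑ j, lam j • uv j with hu
  -- key per-vertex bound
  have key : ∀ i, F.mulVec ((A i).mulVec x + (B i).mulVec u) ≤ s - d := by
    intro i
    have hy : (A i).mulVec x + (B i).mulVec u
        = ∑ j, lam j • ((A i).mulVec (xv j) + (B i).mulVec (uv j)) := by
      simp [hx, hu, mulVec_sum', Matrix.mulVec_smul, Finset.sum_add_distrib]
    rw [hy, mulVec_sum']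
    intro k
    simp only [Finset.sum_apply, Pi.sub_apply, Matrix.mulVec_smul, Pi.smul_apply,
      smul_eq_mul]
    calc ∑ j, lam j * F.mulVec ((A i).mulVec (xv j) + (B i).mulVec (uv j)) k
        ≤ ∑ j, lam j * (s k - d k) := by
          apply Finset.sum_le_sum
          intro j _
          have h := hRCI i j k
          simp only [Pi.add_apply] at h
          exact mul_le_mul_of_nonneg_left (by linarith) (hl0 j)
      _ = s k - d k := by rw [← Finset.sum_mul, hl1, one_mul]
  have hmain : (∑ i, p i • A i).mulVec x + (∑ i, p i • B i).mulVec u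
      = ∑ i, p i • ((A i).mulVec x + (B i).mulVec u) := by
    simp [sum_mulVec', Matrix.smul_mulVec, Finset.sum_add_distrib]
  show F.mulVec _ ≤ s
  rw [hmain, Matrix.mulVec_add, mulVec_sum']
  intro k
  simp only [Pi.add_apply, Finset.sum_apply, Matrix.mulVec_smul, Pi.smul_apply,
    smul_eq_mul]
  have h1 : ∑ i, p i * F.mulVec ((A i).mulVec x + (B i).mulVec u) k ≤ s k - d k := by
    calc ∑ i, p i * F.mulVec ((A i).mulVec x + (B i).mulVec u) k
        ≤ ∑ i, p i * (s k - d k) := by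
          apply Finset.sum_le_sum
          intro i _
          exact mul_le_mul_of_nonneg_left (key i k) (hp0 i)
      _ = s k - d k := by rw [← Finset.sum_mul, hp1, one_mul]
  linarith [hw k]
end

section
/- (Tube propagation.) Suppose for all i = 1,…,N: (a) the RCI inequality F(A_i x_j^s + B_i u_j^s) + d + q ≤ s + F z^s holds componentwise for all vertex pairs (x_j^s, u_j^s) with x_j^s = z^s + V_j s, and (b) the center inequality F(A_i(z_t − z^s) + B_i(v_t − v^s)) ≤ q + F(z_{t+1} − z^s) holds componentwise. Then for all i and j, F(A_i(z_t + V_j s) + B_i(v_t + (u_j^s − v^s))) + d ≤ s + F z_{t+1} componentwise. -/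
open Matrix

/-- Tube propagation: combining the vertex RCI inequality with the center
inequality yields the one-step tube inclusion inequality. -/
theorem tube_propagation (f n m N M : ℕ)
    (F : Matrix (Fin f) (Fin n) ℝ)
    (A : Fin N → Matrix (Fin n) (Fin n) ℝ) (B : Fin N → Matrix (Fin n) (Fin m) ℝ)
    (zt zt1 zs : Fin n → ℝ) (vt vs : Fin m → ℝ) (s q d : Fin f → ℝ)
    (V : Fin M → Matrix (Fin n) (Fin f) ℝ) (c : Fin M → Fin m → ℝ)
    (hRCI : ∀ i j, F.mulVec ((A i).mulVec (zs + (V j).mulVec s) +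
        (B i).mulVec (vs + c j)) + d + q ≤ s + F.mulVec zs)
    (hcenter : ∀ i, F.mulVec ((A i).mulVec (zt - zs) + (B i).mulVec (vt - vs)) ≤
        q + F.mulVec (zt1 - zs)) :
    ∀ i j, F.mulVec ((A i).mulVec (zt + (V j).mulVec s) +
        (B i).mulVec (vt + ((vs + c j) - vs))) + d ≤ s + F.mulVec zt1 := by
  intro i j k
  have h1 := hRCI i j k
  have h2 := hcenter i k
  simp only [Pi.add_apply, Pi.sub_apply, Pi.le_def, mulVec_add, mulVec_sub] at h1 h2 ⊢
  linarith [h1, h2]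
end

section
/- Suppose x lies in the polytope X(z,s) = {x : F(x − z) ≤ s} which equals the convex hull of the points z + V_j s for j = 1,…,M, and suppose for each j and each i, F(A_i(z + V_j s) + B_i(v + U_j c)) + d ≤ s + Fz⁺ componentwise. Then for any λ ∈ Δ_M with x = z + Σ_j λ_j V_j s, any p ∈ Δ_N, and any w with Fw ≤ d, the point (Σ_i p_i A_i)x + (Σ_i p_i B_i)(v + Σ_j λ_j U_j c) + w lies in X(z⁺, s). -/
open Matrix Finset

lemma mulVec_sum'_s18 {a b : Type*} [Fintype b] {ι : Type*} (t : Finset ι)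
    (M : Matrix a b ℝ) (g : ι → b → ℝ) :
    M.mulVec (∑ j ∈ t, g j) = ∑ j ∈ t, M.mulVec (g j) := by
  simp only [← Matrix.mulVecLin_apply]
  exact map_sum M.mulVecLin g t

lemma sum_mulVec'_s18 {a b : Type*} [Fintype b] {ι : Type*} (t : Finset ι)
    (M : ι → Matrix a b ℝ) (v : b → ℝ) :
    (∑ i ∈ t, M i).mulVec v = ∑ i ∈ t, (M i).mulVec v := by
  ext k
  simp only [Matrix.mulVec, dotProduct, Finset.sum_apply, Matrix.sum_apply, Finset.sum_mul]
  rw [Finset.sum_comm]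

/-- The closed-loop state remains in the next tube cross-section `X(z⁺, s)`. -/
theorem next_tube_cross_section (f n m N M : ℕ)
    (F : Matrix (Fin f) (Fin n) ℝ)
    (V : Fin M → Matrix (Fin n) (Fin f) ℝ)
    (U : Fin M → Matrix (Fin m) (Fin (M * m)) ℝ)
    (A : Fin N → Matrix (Fin n) (Fin n) ℝ) (B : Fin N → Matrix (Fin n) (Fin m) ℝ)
    (z zplus : Fin n → ℝ) (v : Fin m → ℝ) (c : Fin (M * m) → ℝ) (s d : Fin f → ℝ)
    (hvert : ∀ i j, F.mulVec ((A i).mulVec (z + (V j).mulVec s) +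
        (B i).mulVec (v + (U j).mulVec c)) + d ≤ s + F.mulVec zplus)
    (x : Fin n → ℝ) (hxX : F.mulVec (x - z) ≤ s)
    (lam : Fin M → ℝ) (hl0 : ∀ j, 0 ≤ lam j) (hl1 : ∑ j, lam j = 1)
    (hx : x = z + ∑ j, lam j • (V j).mulVec s)
    (p : Fin N → ℝ) (hp0 : ∀ i, 0 ≤ p i) (hp1 : ∑ i, p i = 1)
    (w : Fin n → ℝ) (hw : F.mulVec w ≤ d) :
    F.mulVec (((∑ i, p i • A i).mulVec x +
        (∑ i, p i • B i).mulVec (v + ∑ j, lam j • (U j).mulVec c) + w) - zplus) ≤ s := by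
  -- rewrite the main vector as a convex combination
  have key : (∑ i, p i • A i).mulVec x +
      (∑ i, p i • B i).mulVec (v + ∑ j, lam j • (U j).mulVec c)
      = ∑ i, ∑ j, (p i * lam j) •
          ((A i).mulVec (z + (V j).mulVec s) + (B i).mulVec (v + (U j).mulVec c)) := by
    rw [sum_mulVec'_s18, sum_mulVec'_s18, ← Finset.sum_add_distrib]
    refine Finset.sum_congr rfl (fun i _ => ?_)
    have hA : (p i • A i).mulVec x
        = ∑ j, (p i * lam j) • (A i).mulVec (z + (V j).mulVec s) := by
      rw [smul_mulVec, hx]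
      have : (A i).mulVec (z + ∑ j, lam j • (V j).mulVec s)
          = ∑ j, lam j • (A i).mulVec (z + (V j).mulVec s) := by
        simp only [Matrix.mulVec_add, mulVec_sum'_s18, Matrix.mulVec_smul, smul_add,
          Finset.sum_add_distrib, ← Finset.sum_smul, hl1, one_smul]
      rw [this, Finset.smul_sum]
      simp [smul_smul]
    have hB : (p i • B i).mulVec (v + ∑ j, lam j • (U j).mulVec c)
        = ∑ j, (p i * lam j) • (B i).mulVec (v + (U j).mulVec c) := by
      rw [smul_mulVec]
      have : (B i).mulVec (v + ∑ j, lam j • (U j).mulVec c)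
          = ∑ j, lam j • (B i).mulVec (v + (U j).mulVec c) := by
        simp only [Matrix.mulVec_add, mulVec_sum'_s18, Matrix.mulVec_smul, smul_add,
          Finset.sum_add_distrib, ← Finset.sum_smul, hl1, one_smul]
      rw [this, Finset.smul_sum]
      simp [smul_smul]
    rw [hA, hB, ← Finset.sum_add_distrib]
    exact Finset.sum_congr rfl (fun j _ => (smul_add _ _ _).symm)
  rw [key]
  intro k
  have expand : F.mulVec ((∑ i, ∑ j, (p i * lam j) •
      ((A i).mulVec (z + (V j).mulVec s) + (B i).mulVec (v + (U j).mulVec c))) + w - zplus) k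
      = (∑ i, ∑ j, (p i * lam j) *
          (F.mulVec ((A i).mulVec (z + (V j).mulVec s) + (B i).mulVec (v + (U j).mulVec c)) k))
        + F.mulVec w k - F.mulVec zplus k := by
    have : ∀ u u' u'' : Fin n → ℝ, F.mulVec (u + u' - u'') = F.mulVec u + F.mulVec u' - F.mulVec u'' := by
      intro u u' u''
      simp [Matrix.mulVec_add, Matrix.mulVec_sub]
    rw [this]
    simp only [Pi.sub_apply, Pi.add_apply, mulVec_sum'_s18, Finset.sum_apply]
    congr 1; congr 1
    refine Finset.sum_congr rfl (fun i _ => ?_)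
    refine Finset.sum_congr rfl (fun j _ => ?_)
    rw [Matrix.mulVec_smul]
    simp
  rw [expand]
  have hbound : ∀ i j, F.mulVec ((A i).mulVec (z + (V j).mulVec s)
      + (B i).mulVec (v + (U j).mulVec c)) k ≤ s k + F.mulVec zplus k - d k := by
    intro i j
    have := hvert i j k
    simp only [Pi.add_apply] at this
    linarith
  have hsum1 : ∑ i, ∑ j, (p i * lam j) = 1 := by
    rw [← Finset.sum_mul_sum, hp1, hl1, one_mul]
  have hle : ∑ i, ∑ j, (p i * lam j) *
      (F.mulVec ((A i).mulVec (z + (V j).mulVec s) + (B i).mulVec (v + (U j).mulVec c)) k)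
      ≤ ∑ i, ∑ j, (p i * lam j) * (s k + F.mulVec zplus k - d k) := by
    refine Finset.sum_le_sum (fun i _ => Finset.sum_le_sum (fun j _ => ?_))
    exact mul_le_mul_of_nonneg_left (hbound i j) (mul_nonneg (hp0 i) (hl0 j))
  have hws : F.mulVec w k ≤ d k := hw k
  have : ∑ i, ∑ j, (p i * lam j) * (s k + F.mulVec zplus k - d k)
      = s k + F.mulVec zplus k - d k := by
    simp only [← Finset.sum_mul]
    rw [hsum1, one_mul]
  linarith
end
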